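/- Suppose α_i is finite and 2q ≥ α_i. Then there exists a persistent attack a with ‖a‖_0 ≤ q that is not i-identifiable: there exist an attack ã with ‖ã‖_0 ≤ q whose i-th component signal differs from that of a, disturbances d, d̃ and initial states x0, x̃0 such that y(ã,d̃,x̃0)(k) = y(a,d,x0)(k) for all k ≥ 0. -/

import Mathlib

open Filter

noncomputable section

/-- State trajectory of `x(k+1) = A x(k) + B_d d(k) + B_a a(k)` with `x(0) = x0`. -/
def traj {n o m : ℕ} (A : Matrix (Fin n) (Fin n) ℂ) (Bd : Matrix (Fin n) (Fin o) ℂ)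
    (Ba : Matrix (Fin n) (Fin m) ℂ) (a : ℕ → Fin m → ℂ) (d : ℕ → Fin o → ℂ)
    (x0 : Fin n → ℂ) : ℕ → Fin n → ℂ
  | 0 => x0
  | k + 1 => A.mulVec (traj A Bd Ba a d x0 k) + Bd.mulVec (d k) + Ba.mulVec (a k)

/-- Output `y(a,d,x0)(k) = C x(k) + D_d d(k) + D_a a(k)`. -/
def output {n o m p : ℕ} (A : Matrix (Fin n) (Fin n) ℂ) (Bd : Matrix (Fin n) (Fin o) ℂ)
    (Ba : Matrix (Fin n) (Fin m) ℂ) (C : Matrix (Fin p) (Fin n) ℂ)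
    (Dd : Matrix (Fin p) (Fin o) ℂ) (Da : Matrix (Fin p) (Fin m) ℂ)
    (a : ℕ → Fin m → ℂ) (d : ℕ → Fin o → ℂ) (x0 : Fin n → ℂ) (k : ℕ) : Fin p → ℂ :=
  C.mulVec (traj A Bd Ba a d x0 k) + Dd.mulVec (d k) + Da.mulVec (a k)

/-- `‖a‖₀`: the number of component signals of `a` that are not identically zero. -/
def sparsity {m : ℕ} (a : ℕ → Fin m → ℂ) : ℕ := {j : Fin m | ∃ k, a k j ≠ 0}.ncard

/-- A persistent attack does not converge to `0`. -/
def Persistent {m : ℕ} (a : ℕ → Fin m → ℂ) : Prop := ¬ Tendsto a atTop (nhds 0)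

/-- Undetectable: some disturbance and initial state give identically zero output. -/
def Undetectable {n o m p : ℕ} (A : Matrix (Fin n) (Fin n) ℂ) (Bd : Matrix (Fin n) (Fin o) ℂ)
    (Ba : Matrix (Fin n) (Fin m) ℂ) (C : Matrix (Fin p) (Fin n) ℂ)
    (Dd : Matrix (Fin p) (Fin o) ℂ) (Da : Matrix (Fin p) (Fin m) ℂ)
    (a : ℕ → Fin m → ℂ) : Prop :=
  ∃ d x0, ∀ k, output A Bd Ba C Dd Da a d x0 k = 0

/-- Security index `α_i`: minimal `‖a‖₀` over persistent undetectable attacks whose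
`i`-th component signal is not identically zero (`⊤` if none exists). -/
def secIndex {n o m p : ℕ} (A : Matrix (Fin n) (Fin n) ℂ) (Bd : Matrix (Fin n) (Fin o) ℂ)
    (Ba : Matrix (Fin n) (Fin m) ℂ) (C : Matrix (Fin p) (Fin n) ℂ)
    (Dd : Matrix (Fin p) (Fin o) ℂ) (Da : Matrix (Fin p) (Fin m) ℂ) (i : Fin m) : ℕ∞ :=
  sInf {c : ℕ∞ | ∃ a : ℕ → Fin m → ℂ, Persistent a ∧ Undetectable A Bd Ba C Dd Da a ∧
    (∃ k, a k i ≠ 0) ∧ c = (sparsity a : ℕ∞)}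

variable {n o m p : ℕ} (A : Matrix (Fin n) (Fin n) ℂ) (Bd : Matrix (Fin n) (Fin o) ℂ)
  (Ba : Matrix (Fin n) (Fin m) ℂ) (C : Matrix (Fin p) (Fin n) ℂ)
  (Dd : Matrix (Fin p) (Fin o) ℂ) (Da : Matrix (Fin p) (Fin m) ℂ)

/-!
Since `α_i ≤ 2q`, there is a persistent undetectable attack `a⋆` with
`a⋆_i ≠ 0` and `‖a⋆‖₀ ≤ 2q`. Splitting its support in two gives `a⋆ = b + b'` with
`‖b‖₀, ‖b'‖₀ ≤ q`, and one of the halves, say `b`, is persistent since `a⋆` is. By linearity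
`y(-b', 0, 0) = y(b, d⋆, x⋆)` for the disturbance and initial state hiding `a⋆`, while
`-b'_i ≠ b_i` because `b_i + b'_i = a⋆_i ≠ 0`.
-/

theorem traj_add (a a' : ℕ → Fin m → ℂ) (d d' : ℕ → Fin o → ℂ) (x0 x0' : Fin n → ℂ) (k : ℕ) :
    traj A Bd Ba (a + a') (d + d') (x0 + x0') k
      = traj A Bd Ba a d x0 k + traj A Bd Ba a' d' x0' k := by
  induction k with
  | zero => rfl
  | succ k ih =>
    simp only [traj, ih, Matrix.mulVec_add, Pi.add_apply]
    abel

theorem output_add (a a' : ℕ → Fin m → ℂ) (d d' : ℕ → Fin o → ℂ) (x0 x0' : Fin n → ℂ) (k : ℕ) :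
    output A Bd Ba C Dd Da (a + a') (d + d') (x0 + x0') k
      = output A Bd Ba C Dd Da a d x0 k + output A Bd Ba C Dd Da a' d' x0' k := by
  simp only [output, traj_add, Matrix.mulVec_add, Pi.add_apply]
  abel

theorem output_neg_eq_of_output_add_eq_zero {a a' : ℕ → Fin m → ℂ} {d : ℕ → Fin o → ℂ}
    {x0 : Fin n → ℂ} (h : ∀ k, output A Bd Ba C Dd Da (a + a') d x0 k = 0) (k : ℕ) :
    output A Bd Ba C Dd Da (-a') 0 0 k = output A Bd Ba C Dd Da a d x0 k := by
  simpa [h k] using (output_add A Bd Ba C Dd Da (a + a') (-a') d 0 x0 0 k).symm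

theorem sparsity_neg (a : ℕ → Fin m → ℂ) : sparsity (-a) = sparsity a := by
  simp only [sparsity, Pi.neg_apply, ne_eq, neg_eq_zero]

theorem sparsity_le_ncard {a : ℕ → Fin m → ℂ} {s : Set (Fin m)} (h : ∀ k j, a k j ≠ 0 → j ∈ s) :
    sparsity a ≤ s.ncard :=
  Set.ncard_le_ncard (fun j ⟨k, hk⟩ => h k j hk) (Set.toFinite s)

theorem exists_add_eq_of_sparsity_le_add {a : ℕ → Fin m → ℂ} {q r : ℕ}
    (h : sparsity a ≤ q + r) :
    ∃ b b' : ℕ → Fin m → ℂ, b + b' = a ∧ sparsity b ≤ q ∧ sparsity b' ≤ r := by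
  set T : Set (Fin m) := {j | ∃ k, a k j ≠ 0}
  obtain ⟨S, hST, hS⟩ := Set.exists_subset_card_eq (min_le_right q T.ncard)
  refine ⟨fun k => S.indicator (a k), fun k => Sᶜ.indicator (a k),
    funext fun k => S.indicator_self_add_compl (a k), ?_, ?_⟩
  · calc sparsity _ ≤ S.ncard := sparsity_le_ncard fun k j => Set.mem_of_indicator_ne_zero
      _ ≤ q := hS ▸ min_le_left _ _
  · calc sparsity _ ≤ (T \ S).ncard := sparsity_le_ncard fun k j hj =>
          ⟨⟨k, Set.indicator_apply_ne_zero.1 hj |>.2⟩, Set.indicator_apply_ne_zero.1 hj |>.1⟩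
      _ = T.ncard - min q T.ncard := by rw [Set.ncard_sdiff hST, hS]
      _ ≤ r := by change T.ncard ≤ q + r at h; omega

theorem Persistent.left_or_right {a a' : ℕ → Fin m → ℂ} (h : Persistent (a + a')) :
    Persistent a ∨ Persistent a' := by
  by_contra hn
  simp only [not_or, Persistent, not_not] at hn
  exact h (add_zero (0 : Fin m → ℂ) ▸ hn.1.add hn.2)

theorem exists_persistent_undetectable_of_secIndex_le {i : Fin m} {N : ℕ}
    (h : secIndex A Bd Ba C Dd Da i ≤ N) :
    ∃ a, Persistent a ∧ Undetectable A Bd Ba C Dd Da a ∧ (∃ k, a k i ≠ 0) ∧ sparsity a ≤ N := by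
  obtain ⟨_, ⟨a, hper, hund, hi, rfl⟩, hlt⟩ :=
    sInf_lt_iff.1 (h.trans_lt (ENat.natCast_lt_natCast.2 N.lt_succ_self))
  exact ⟨a, hper, hund, hi, Nat.lt_succ_iff.1 (ENat.natCast_lt_natCast.1 hlt)⟩

theorem exists_not_iIdentifiable_of_secIndex_le_two_mul (i : Fin m) (q : ℕ)
    (hq : secIndex A Bd Ba C Dd Da i ≤ ((2 * q : ℕ) : ℕ∞)) :
    ∃ a : ℕ → Fin m → ℂ, Persistent a ∧ sparsity a ≤ q ∧
      ∃ (a' : ℕ → Fin m → ℂ) (d d' : ℕ → Fin o → ℂ) (x0 x0' : Fin n → ℂ),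
        sparsity a' ≤ q ∧ (fun k => a' k i) ≠ (fun k => a k i) ∧
        ∀ k, output A Bd Ba C Dd Da a' d' x0' k = output A Bd Ba C Dd Da a d x0 k := by
  obtain ⟨a, hper, ⟨d, x0, hd⟩, ⟨k, hk⟩, hsp⟩ :=
    exists_persistent_undetectable_of_secIndex_le A Bd Ba C Dd Da hq
  obtain ⟨b, b', rfl, hb, hb'⟩ := exists_add_eq_of_sparsity_le_add (two_mul q ▸ hsp)
  clear hsp
  wlog hbper : Persistent b generalizing b b'
  · rw [add_comm] at hper hd hk
    exact this b' b hper hd hk hb' hb (hper.left_or_right.resolve_right hbper)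
  refine ⟨b, hbper, hb, -b', d, 0, x0, 0, sparsity_neg b' ▸ hb', fun heq => hk ?_,
    output_neg_eq_of_output_add_eq_zero A Bd Ba C Dd Da hd⟩
  simp [← congrFun heq k]
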